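/- For any estimators ŵ_i with E[ŵ_i] = w_i, and any 1 ≤ m ≤ n with n ≥ 2, the average variance over uniform m-subsets satisfies V_m ≥ m·((n−m)/(n−1))·V_1, where V_m = E_{|I|=m}[Var[ŵ_I]] and V_1 = (1/n)∑_i Var[ŵ_i]. In particular, no matter how negative the covariances are, the average variance is reduced by at most a factor (n−1)/(n−m) relative to m·V_1. -/

import Mathlib

/-!
Since `Var[ŵ_I] = ∑_{i,j ∈ I} Cov(ŵ_i, ŵ_j)`, summing over all `m`-subsets `I` weights each diagonal
term by the number `C(n-1, m-1)` of subsets containing `i`, and each off-diagonal term by the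
number `C(n-1, m-1) - C(n-2, m-1)` of subsets containing both `i` and `j`. Hence
`∑_I Var[ŵ_I] = (C(n-1, m-1) - C(n-2, m-1)) Var[ŵ_[n]] + C(n-2, m-1) ∑_i Var[ŵ_i]`, and dropping the
nonnegative first term leaves `C(n-2, m-1) / C(n, m) = m (n-m) / (n (n-1))` times `∑_i Var[ŵ_i]`.
-/

open MeasureTheory ProbabilityTheory Finset

namespace Finset

variable {α : Type*} [DecidableEq α] {s : Finset α} {k : ℕ} {a b : α}

lemma filter_notMem_powersetCard (b : α) :
    {I ∈ s.powersetCard k | b ∉ I} = (s.erase b).powersetCard k := by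
  ext I
  simp only [mem_filter, mem_powersetCard, subset_erase]
  tauto

lemma card_filter_mem_powersetCard (ha : a ∈ s) (hk : 1 ≤ k) :
    #{I ∈ s.powersetCard k | a ∈ I} = (#s - 1).choose (k - 1) := by
  simpa using card_filter_powersetCard_subset {a} s k (by simpa) (by simpa)

lemma card_filter_mem_and_mem_powersetCard (ha : a ∈ s) (hb : b ∈ s) (hab : a ≠ b)
    (hk : 1 ≤ k) :
    #{I ∈ s.powersetCard k | a ∈ I ∧ b ∈ I}
      = (#s - 1).choose (k - 1) - (#s - 2).choose (k - 1) := by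
  have hsplit := card_filter_add_card_filter_not (s := {I ∈ s.powersetCard k | a ∈ I})
    (fun I => b ∈ I)
  rw [filter_filter, filter_comm, filter_notMem_powersetCard,
    card_filter_mem_powersetCard (mem_erase.2 ⟨hab, ha⟩) hk, card_erase_of_mem hb,
    card_filter_mem_powersetCard ha hk, Nat.sub_sub, one_add_one_eq_two] at hsplit
  omega

lemma card_filter_mem_and_mem_powersetCard_eq_ite (ha : a ∈ s) (hb : b ∈ s) (hk : 1 ≤ k) :
    #{I ∈ s.powersetCard k | a ∈ I ∧ b ∈ I}
      = ((#s - 1).choose (k - 1) - (#s - 2).choose (k - 1))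
        + if a = b then (#s - 2).choose (k - 1) else 0 := by
  split_ifs with hab
  · subst hab
    have : (#s - 2).choose (k - 1) ≤ (#s - 1).choose (k - 1) := Nat.choose_le_choose _ (by omega)
    simp only [and_self, card_filter_mem_powersetCard ha hk]
    omega
  · rw [card_filter_mem_and_mem_powersetCard ha hb hab hk, add_zero]

theorem sum_powersetCard_sum_sum {M : Type*} [AddCommMonoid M] (f : α → α → M) (hk : 1 ≤ k) :
    ∑ I ∈ s.powersetCard k, ∑ i ∈ I, ∑ j ∈ I, f i j
      = ((#s - 1).choose (k - 1) - (#s - 2).choose (k - 1)) • ∑ i ∈ s, ∑ j ∈ s, f i j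
        + (#s - 2).choose (k - 1) • ∑ i ∈ s, f i i := by
  calc ∑ I ∈ s.powersetCard k, ∑ i ∈ I, ∑ j ∈ I, f i j
      = ∑ I ∈ s.powersetCard k, ∑ i ∈ s, ∑ j ∈ s, if i ∈ I ∧ j ∈ I then f i j else 0 := by
        refine sum_congr rfl fun I hI => ?_
        have hsum : ∀ g : α → M, ∑ i ∈ I, g i = ∑ i ∈ s, if i ∈ I then g i else 0 := fun g => by
          rw [sum_ite_mem, inter_eq_right.2 (mem_powersetCard.1 hI).1]
        rw [hsum]
        exact sum_congr rfl fun i _ => by by_cases hi : i ∈ I <;> simp [hi, hsum]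
    _ = ∑ i ∈ s, ∑ j ∈ s, #{I ∈ s.powersetCard k | i ∈ I ∧ j ∈ I} • f i j := by
        rw [sum_comm]
        refine sum_congr rfl fun i _ => ?_
        rw [sum_comm]
        refine sum_congr rfl fun j _ => ?_
        rw [sum_ite, sum_const_zero, add_zero, sum_const]
    _ = ∑ i ∈ s, ∑ j ∈ s, (((#s - 1).choose (k - 1) - (#s - 2).choose (k - 1)) • f i j
          + if i = j then (#s - 2).choose (k - 1) • f i j else 0) := by
        refine sum_congr rfl fun i hi => sum_congr rfl fun j hj => ?_
        rw [card_filter_mem_and_mem_powersetCard_eq_ite hi hj hk, add_smul, ite_smul, zero_smul]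
    _ = _ := by
        simp only [sum_add_distrib, ← smul_sum, sum_ite_eq, sum_ite_mem, inter_self]

end Finset

lemma Nat.mul_sub_one_mul_choose_sub_two {n m : ℕ} (hn : 2 ≤ n) (hm : 1 ≤ m) :
    n * (n - 1) * (n - 2).choose (m - 1) = m * (n - m) * n.choose m := by
  obtain ⟨n, rfl⟩ := Nat.exists_eq_add_of_le' hn
  obtain ⟨m, rfl⟩ := Nat.exists_eq_add_of_le' hm
  have h₁ := Nat.choose_mul_succ_eq n m
  have h₂ := Nat.add_one_mul_choose_eq (n + 1) m
  simp only [Nat.add_sub_cancel]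
  rw [show n + 2 - (m + 1) = n + 1 - m by omega]
  calc (n + 2) * (n + 1) * n.choose m = (n + 2) * (n + 1).choose m * (n + 1 - m) := by
        rw [mul_assoc, mul_comm (n + 1), h₁, mul_assoc]
    _ = _ := by rw [h₂]; ring

section

variable {Ω ι : Type*} [MeasurableSpace Ω] {μ : Measure Ω} [IsFiniteMeasure μ]
  [DecidableEq ι] {s : Finset ι} {k : ℕ} {X : ι → Ω → ℝ}

theorem sum_powersetCard_variance_sum (hX : ∀ i ∈ s, MemLp (X i) 2 μ) (hk : 1 ≤ k) :
    ∑ I ∈ s.powersetCard k, Var[fun ω => ∑ i ∈ I, X i ω; μ]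
      = ((#s - 1).choose (k - 1) - (#s - 2).choose (k - 1) : ℕ) * Var[fun ω => ∑ i ∈ s, X i ω; μ]
        + (#s - 2).choose (k - 1) * ∑ i ∈ s, Var[X i; μ] := by
  have hXI : ∀ I ∈ s.powersetCard k, ∀ i ∈ I, MemLp (X i) 2 μ := fun I hI i hi =>
    hX i ((mem_powersetCard.1 hI).1 hi)
  rw [sum_congr rfl fun I hI => variance_fun_sum' (hXI I hI), sum_powersetCard_sum_sum _ hk,
    variance_fun_sum' hX, nsmul_eq_mul, nsmul_eq_mul,
    sum_congr rfl fun i hi => covariance_self (hX i hi).aemeasurable]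

end

theorem avg_variance_lower_bound_general
    {Ω : Type*} [MeasurableSpace Ω] (μ : Measure Ω) [IsProbabilityMeasure μ]
    (n m : ℕ) (hn : 2 ≤ n) (hm1 : 1 ≤ m) (hmn : m ≤ n)
    (what : Fin n → Ω → ℝ)
    (hL2 : ∀ i, MemLp (what i) 2 μ) :
    (∑ I ∈ (Finset.univ : Finset (Fin n)).powersetCard m,
        variance (fun ω => ∑ i ∈ I, what i ω) μ) / (n.choose m : ℝ)
      ≥ (m : ℝ) * (((n : ℝ) - m) / ((n : ℝ) - 1)) *
          ((∑ i, variance (what i) μ) / n) := by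
  have hchoose : (0 : ℝ) < n.choose m := by exact_mod_cast Nat.choose_pos hmn
  have hratio : ((n - 2).choose (m - 1) : ℝ) = n.choose m * (m * ((n - m) / (n - 1)) / n) := by
    have h := Nat.mul_sub_one_mul_choose_sub_two hn hm1
    have hn1 : (n : ℝ) - 1 ≠ 0 := sub_ne_zero.2 (by exact_mod_cast (by omega : n ≠ 1))
    rw [← Nat.cast_inj (R := ℝ)] at h
    push_cast [Nat.cast_sub (by omega : 1 ≤ n), Nat.cast_sub hmn] at h
    field_simp
    linear_combination h
  rw [sum_powersetCard_variance_sum (fun i _ => hL2 i) hm1, card_univ, Fintype.card_fin, ge_iff_le,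
    le_div_iff₀ hchoose]
  calc _ = ((n - 2).choose (m - 1) : ℝ) * ∑ i, Var[what i; μ] := by rw [hratio]; ring
    _ ≤ _ := le_add_of_nonneg_left (mul_nonneg (Nat.cast_nonneg _) (variance_nonneg _ _))

/-- No matter how negative the covariances are, the average variance `V_m` over
uniform `m`-subsets satisfies `V_m ≥ m·((n−m)/(n−1))·V_1`, where
`V_1 = (1/n)·∑ᵢ Var[what i]`. -/
theorem avg_variance_lower_bound
    {Ω : Type*} [MeasurableSpace Ω] (μ : Measure Ω) [IsProbabilityMeasure μ]
    (n m : ℕ) (hn : 2 ≤ n) (hm1 : 1 ≤ m) (hmn : m ≤ n)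
    (w : Fin n → ℝ) (what : Fin n → Ω → ℝ)
    (hL2 : ∀ i, MemLp (what i) 2 μ)
    (hunb : ∀ i, ∫ ω, what i ω ∂μ = w i) :
    (∑ I ∈ (Finset.univ : Finset (Fin n)).powersetCard m,
        variance (fun ω => ∑ i ∈ I, what i ω) μ) / (n.choose m : ℝ)
      ≥ (m : ℝ) * (((n : ℝ) - m) / ((n : ℝ) - 1)) *
          ((∑ i, variance (what i) μ) / n) :=
  avg_variance_lower_bound_general μ n m hn hm1 hmn what hL2
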